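/- Let $L_e = \{y + te : 0 \leq t \leq 1\}$ be a unit line segment in $\mathbb{R}^n$, let $T_e^\delta$ be its closed $\delta$-neighbourhood, and let $B$ be a ball of diameter at least $\delta$ with $L_e \cap B \neq \emptyset$. Then $\frac{1}{\mathcal{H}^n(T_e^\delta)} \int_{T_e^\delta} \chi_{2B} \, d\mathcal{H}^n \geq c(n) \int_{L_e} \chi_{B} \, d\mathcal{H}^1$ for a constant $c(n) > 0$ depending only on $n$. -/

import Mathlib

/-
The segment meets `B` in a subsegment of length `L`. Cover the tube by `⌊1/δ⌋ + 1` balls of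
radius `2δ` centred on the segment, and pack `⌊2L/δ⌋ + 1` disjoint balls of radius `δ/5`,
centred at points of that subsegment spaced `δ/2` apart, into the tube and `2B`. For a Haar
measure the two radii only differ by the factor `10ⁿ` in measure, and
`L (⌊1/δ⌋ + 1) ≤ 2 (⌊2L/δ⌋ + 1)`.
-/

open Set Metric MeasureTheory

def seg {n : ℕ} (e y : EuclideanSpace ℝ (Fin n)) : Set (EuclideanSpace ℝ (Fin n)) :=
  (fun t : ℝ => y + t • e) '' Set.Icc (0:ℝ) 1

def tube {n : ℕ} (δ : ℝ) (e y : EuclideanSpace ℝ (Fin n)) : Set (EuclideanSpace ℝ (Fin n)) :=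
  Metric.cthickening δ (seg e y)

open Measure Module

lemma exists_le_floor_div_abs_sub_mul_le {δ t T : ℝ} (hδ : 0 < δ) (ht : t ∈ Icc 0 T) :
    ∃ i : ℕ, i ≤ ⌊T / δ⌋₊ ∧ |t - i * δ| ≤ δ := by
  refine ⟨⌊t / δ⌋₊, Nat.floor_le_floor (div_le_div_of_nonneg_right ht.2 hδ.le), ?_⟩
  have hle := (le_div_iff₀ hδ).1 (Nat.floor_le (div_nonneg ht.1 hδ.le))
  have hlt := (div_lt_iff₀ hδ).1 (Nat.lt_floor_add_one (t / δ))
  rw [abs_le]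
  constructor <;> linarith

lemma mul_floor_one_div_add_one_le {δ L : ℝ} (hδ : 0 < δ) (hL₀ : 0 ≤ L) (hL₁ : L ≤ 1) :
    L * (⌊1 / δ⌋₊ + 1) ≤ 2 * (⌊2 * L / δ⌋₊ + 1) := by
  have hN := (le_div_iff₀ hδ).1 (Nat.floor_le (one_div_pos.2 hδ).le)
  have hk := (div_lt_iff₀ hδ).1 (Nat.lt_floor_add_one (2 * L / δ))
  refine le_of_mul_le_mul_right ?_ hδ
  nlinarith

lemma cthickening_image_Icc_subset_biUnion_closedBall {X : Type*} [PseudoMetricSpace X]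
    {γ : ℝ → X} (hγ : LipschitzWith 1 γ) {δ : ℝ} (hδ : 0 < δ) :
    cthickening δ (γ '' Icc 0 1) ⊆
      ⋃ i ∈ Finset.range (⌊1 / δ⌋₊ + 1), closedBall (γ (i * δ)) (2 * δ) := by
  rw [(isCompact_Icc.image hγ.continuous).cthickening_eq_biUnion_closedBall hδ.le,
    biUnion_image]
  refine iUnion₂_subset fun t ht z hz => ?_
  obtain ⟨i, hi, hti⟩ := exists_le_floor_div_abs_sub_mul_le hδ ht
  refine mem_iUnion₂.2 ⟨i, Finset.mem_range_succ_iff.2 hi, ?_⟩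
  calc dist z (γ (i * δ)) ≤ dist z (γ t) + dist (γ t) (γ (i * δ)) := dist_triangle _ _ _
    _ ≤ δ + δ := by
      gcongr
      · exact hz
      · have h := hγ.dist_le_mul t (i * δ)
        rw [NNReal.coe_one, one_mul, Real.dist_eq] at h
        exact h.trans hti
    _ = 2 * δ := by ring

lemma closedBall_subset_cthickening_inter_closedBall {X : Type*} [PseudoMetricSpace X]
    {s : Set X} {x z : X} {δ ρ r : ℝ} (hz : z ∈ s ∩ closedBall x r) (hρδ : ρ ≤ δ) (hρr : ρ ≤ r) :
    closedBall z ρ ⊆ cthickening δ s ∩ closedBall x (2 * r) :=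
  subset_inter ((closedBall_subset_closedBall hρδ).trans (closedBall_subset_cthickening hz.1 δ))
    (closedBall_subset_closedBall' (by linarith [mem_closedBall.1 hz.2]))

section Line

variable {E : Type*} [NormedAddCommGroup E] [NormedSpace ℝ E]

lemma isometry_add_smul {e : E} (he : ‖e‖ = 1) (y : E) : Isometry fun t : ℝ => y + t • e :=
  Isometry.of_dist_eq fun t s => by
    rw [dist_add_left, dist_eq_norm, ← sub_smul, norm_smul, he, mul_one, Real.dist_eq,
      Real.norm_eq_abs]

lemma exists_image_Icc_inter_closedBall_eq (e y x : E) (r : ℝ)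
    (hne : ((fun t : ℝ => y + t • e) '' Icc 0 1 ∩ closedBall x r).Nonempty) :
    ∃ a b : ℝ, 0 ≤ a ∧ a ≤ b ∧ b ≤ 1 ∧
      (fun t : ℝ => y + t • e) '' Icc 0 1 ∩ closedBall x r =
        (fun t : ℝ => y + t • e) '' Icc a b := by
  set γ := fun t : ℝ => y + t • e
  set I := Icc (0 : ℝ) 1 ∩ γ ⁻¹' closedBall x r
  have hγ : γ = AffineMap.lineMap y (y + e) := by
    funext t
    simp [γ, AffineMap.lineMap_apply, add_comm]
  have hconv : Convex ℝ I :=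
    (convex_Icc 0 1).inter (hγ ▸ (convex_closedBall x r).affine_preimage _)
  have hcpt : IsCompact I :=
    isCompact_Icc.inter_right (isClosed_closedBall.preimage (by fun_prop))
  have hI : I.Nonempty := by
    obtain ⟨_, ⟨t, ht, rfl⟩, hx⟩ := hne
    exact ⟨t, ht, hx⟩
  obtain ⟨a, b, hIab⟩ : ∃ a b, I = Icc a b :=
    ⟨_, _, eq_Icc_of_connected_compact ⟨hI, hconv.isPreconnected⟩ hcpt⟩
  have hab : a ≤ b := nonempty_Icc.1 (hIab ▸ hI)
  have ha : a ∈ I := hIab ▸ left_mem_Icc.2 hab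
  have hb : b ∈ I := hIab ▸ right_mem_Icc.2 hab
  exact ⟨a, b, ha.1.1, hab, hb.1.2, by rw [← image_inter_preimage]; exact congrArg _ hIab⟩

end Line

section Haar

variable {E : Type*} [NormedAddCommGroup E] [MeasurableSpace E] [BorelSpace E]
  (μ : Measure E) [μ.IsAddHaarMeasure]

lemma measure_le_card_mul_of_subset_biUnion_closedBall {ι : Type*} (s : Finset ι) (p : ι → E)
    (ρ : ℝ) {U : Set E} (hU : U ⊆ ⋃ i ∈ s, closedBall (p i) ρ) :
    μ U ≤ s.card * μ (closedBall 0 ρ) :=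
  calc μ U ≤ ∑ i ∈ s, μ (closedBall (p i) ρ) :=
        (measure_mono hU).trans (measure_biUnion_finset_le _ _)
    _ = s.card * μ (closedBall 0 ρ) := by simp [addHaar_closedBall_center]

lemma card_mul_le_measure_of_closedBall_subset {ι : Type*} (s : Finset ι) (p : ι → E) {ρ : ℝ}
    (hsep : (s : Set ι).Pairwise fun i j => 2 * ρ < dist (p i) (p j)) {U : Set E}
    (hU : ∀ i ∈ s, closedBall (p i) ρ ⊆ U) :
    s.card * μ (closedBall 0 ρ) ≤ μ U :=
  calc s.card * μ (closedBall 0 ρ) = ∑ i ∈ s, μ (closedBall (p i) ρ) := by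
        simp [addHaar_closedBall_center]
    _ = μ (⋃ i ∈ s, closedBall (p i) ρ) :=
        (measure_biUnion_finset (fun i hi j hj hij => closedBall_disjoint_closedBall
          (by linarith [hsep hi hj hij])) fun _ _ => measurableSet_closedBall).symm
    _ ≤ μ U := measure_mono (iUnion₂_subset hU)

lemma measure_cthickening_image_Icc_le {γ : ℝ → E} (hγ : LipschitzWith 1 γ) {δ : ℝ}
    (hδ : 0 < δ) :
    μ (cthickening δ (γ '' Icc 0 1)) ≤ (⌊1 / δ⌋₊ + 1) * μ (closedBall 0 (2 * δ)) := by
  simpa using measure_le_card_mul_of_subset_biUnion_closedBall μ _ _ _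
    (cthickening_image_Icc_subset_biUnion_closedBall hγ hδ)

lemma floor_add_one_mul_le_measure {γ : ℝ → E} (hγ : Isometry γ) {a b δ : ℝ} (hab : a ≤ b)
    (hδ : 0 < δ) {U : Set E} (hU : ∀ t ∈ Icc a b, closedBall (γ t) (δ / 5) ⊆ U) :
    (⌊2 * (b - a) / δ⌋₊ + 1) * μ (closedBall 0 (δ / 5)) ≤ μ U := by
  have hk : ⌊2 * (b - a) / δ⌋₊ * (δ / 2) ≤ b - a := by
    have := (le_div_iff₀ hδ).1 (Nat.floor_le (a := 2 * (b - a) / δ) (by positivity))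
    linarith
  set k := ⌊2 * (b - a) / δ⌋₊
  have hmem : ∀ i ∈ Finset.range (k + 1), a + i * (δ / 2) ∈ Icc a b := by
    intro i hi
    have hik : (i : ℝ) ≤ k := by exact_mod_cast Finset.mem_range_succ_iff.1 hi
    constructor <;> nlinarith
  have hsep : (Finset.range (k + 1) : Set ℕ).Pairwise
      fun i j => 2 * (δ / 5) < dist (γ (a + i * (δ / 2))) (γ (a + j * (δ / 2))) := by
    intro i _ j _ hij
    have hij : (1 : ℝ) ≤ |(i : ℝ) - j| := by
      exact_mod_cast Int.one_le_abs (sub_ne_zero.2 (Int.natCast_inj.not.2 hij))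
    rw [hγ.dist_eq, Real.dist_eq,
      show a + i * (δ / 2) - (a + j * (δ / 2)) = (i - j) * (δ / 2) by ring, abs_mul,
      abs_of_pos (half_pos hδ)]
    nlinarith
  simpa using card_mul_le_measure_of_closedBall_subset μ _ _ hsep fun i hi => hU _ (hmem i hi)

end Haar

theorem ofReal_mul_hausdorffMeasure_inter_closedBall_mul_measure_cthickening_le
    {E : Type*} [NormedAddCommGroup E] [NormedSpace ℝ E] [FiniteDimensional ℝ E]
    [MeasurableSpace E] [BorelSpace E] (μ : Measure E) [μ.IsAddHaarMeasure]
    {e y x : E} {δ r : ℝ} (he : ‖e‖ = 1) (hδ : 0 < δ) (hδr : δ ≤ 2 * r)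
    (hne : ((fun t : ℝ => y + t • e) '' Icc 0 1 ∩ closedBall x r).Nonempty) :
    ENNReal.ofReal (1 / (2 * 10 ^ finrank ℝ E)) *
        μH[1] ((fun t : ℝ => y + t • e) '' Icc 0 1 ∩ closedBall x r) *
        μ (cthickening δ ((fun t : ℝ => y + t • e) '' Icc 0 1)) ≤
      μ (cthickening δ ((fun t : ℝ => y + t • e) '' Icc 0 1) ∩ closedBall x (2 * r)) := by
  set γ := fun t : ℝ => y + t • e
  have hγ : Isometry γ := isometry_add_smul he y
  obtain ⟨a, b, ha, hab, hb, hS⟩ := exists_image_Icc_inter_closedBall_eq e y x r hne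
  have hlength : μH[1] (γ '' Icc 0 1 ∩ closedBall x r) = ENNReal.ofReal (b - a) := by
    rw [hS, hγ.hausdorffMeasure_image (Or.inl zero_le_one), hausdorffMeasure_real,
      Real.volume_Icc]
  have hcover := measure_cthickening_image_Icc_le μ hγ.lipschitz hδ
  rw [show 2 * δ = 10 * (δ / 5) by ring, addHaar_closedBall_mul μ 0 (by norm_num) (by positivity)]
    at hcover
  have hpack := floor_add_one_mul_le_measure μ hγ hab hδ
    (U := cthickening δ (γ '' Icc 0 1) ∩ closedBall x (2 * r)) fun t ht =>
      closedBall_subset_cthickening_inter_closedBall (hS ▸ mem_image_of_mem γ ht)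
        (by linarith) (by linarith)
  have harith := mul_floor_one_div_add_one_le hδ (sub_nonneg.2 hab) (by linarith)
  have ofReal_natCast_add_one (m : ℕ) : ENNReal.ofReal (m + 1) = m + 1 := by
    rw [ENNReal.ofReal_add (by positivity) zero_le_one, ENNReal.ofReal_natCast, ENNReal.ofReal_one]
  rw [hlength]
  calc _ ≤ ENNReal.ofReal (1 / (2 * 10 ^ finrank ℝ E)) * ENNReal.ofReal (b - a) *
        ((⌊1 / δ⌋₊ + 1) * (ENNReal.ofReal (10 ^ finrank ℝ E) * μ (closedBall 0 (δ / 5)))) := by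
        gcongr
    _ = ENNReal.ofReal ((b - a) * (⌊1 / δ⌋₊ + 1) / 2) * μ (closedBall 0 (δ / 5)) := by
        rw [← ofReal_natCast_add_one, ← mul_assoc, ← ENNReal.ofReal_mul (by positivity),
          ← mul_assoc, ← ENNReal.ofReal_mul (by positivity), ← ENNReal.ofReal_mul (by positivity)]
        congr 2
        field_simp
    _ ≤ (⌊2 * (b - a) / δ⌋₊ + 1) * μ (closedBall 0 (δ / 5)) := by
        rw [← ofReal_natCast_add_one]
        gcongr
        linarith
    _ ≤ _ := hpack

theorem stmt8_general (n : ℕ) :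
    ∃ c : ℝ, 0 < c ∧
      ∀ (e y x : EuclideanSpace ℝ (Fin n)) (δ r : ℝ), ‖e‖ = 1 → 0 < δ → δ ≤ 2 * r →
        (seg e y ∩ Metric.closedBall x r).Nonempty →
        ENNReal.ofReal c * μH[1] (seg e y ∩ Metric.closedBall x r) ≤
          μH[(n : ℝ)] (tube δ e y ∩ Metric.closedBall x (2 * r)) / μH[(n : ℝ)] (tube δ e y) := by
  have hdim : finrank ℝ (EuclideanSpace ℝ (Fin n)) = n := finrank_euclideanSpace_fin
  refine ⟨1 / (2 * 10 ^ n), by positivity, fun e y x δ r he hδ hδr hne => ?_⟩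
  have : IsAddHaarMeasure (μH[(n : ℝ)] : Measure (EuclideanSpace ℝ (Fin n))) := by
    simpa [hdim] using isAddHaarMeasure_hausdorffMeasure (E := EuclideanSpace ℝ (Fin n))
  have hseg : IsCompact (seg e y) := isCompact_Icc.image (by fun_prop)
  have hy : y ∈ seg e y := ⟨0, left_mem_Icc.2 zero_le_one, by simp⟩
  have hpos : μH[(n : ℝ)] (tube δ e y) ≠ 0 := ((measure_closedBall_pos _ y hδ).trans_le
    (measure_mono (closedBall_subset_cthickening hy δ))).ne'
  have hfin : μH[(n : ℝ)] (tube δ e y) ≠ ⊤ := hseg.cthickening.measure_ne_top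
  rw [ENNReal.le_div_iff_mul_le (Or.inl hpos) (Or.inl hfin)]
  have key := ofReal_mul_hausdorffMeasure_inter_closedBall_mul_measure_cthickening_le
    (μH[(n : ℝ)] : Measure (EuclideanSpace ℝ (Fin n))) he hδ hδr hne
  rwa [hdim] at key

/-- The average of `χ_{2B}` over the `δ`-tube dominates (up to a dimensional constant)
the length of the segment inside `B`, when `B` has diameter at least `δ` and meets the segment. -/
theorem stmt8 (n : ℕ) (hn : 1 ≤ n) :
    ∃ c : ℝ, 0 < c ∧
      ∀ (e y x : EuclideanSpace ℝ (Fin n)) (δ r : ℝ), ‖e‖ = 1 → 0 < δ → δ ≤ 2 * r →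
        (seg e y ∩ Metric.closedBall x r).Nonempty →
        ENNReal.ofReal c * μH[1] (seg e y ∩ Metric.closedBall x r) ≤
          μH[(n : ℝ)] (tube δ e y ∩ Metric.closedBall x (2 * r)) / μH[(n : ℝ)] (tube δ e y) :=
  stmt8_general n
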